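/- For the Routh sphere rolling under a constant vertical gravitational force, the energy H1 = (ω, M) + 2U with U = −m·𝗀·(r, γ) is conserved: its derivative along the gravity vector field X_𝗀 vanishes identically, X_𝗀(H1) = 0. -/

import Mathlib

noncomputable section

/-- Phase-space factor `ℝ³`. -/
abbrev V3 : Type := Fin 3 → ℝ

/-- Euclidean inner product `(u, v)` on `ℝ³`. -/
def dot3 (u v : V3) : ℝ := u 0 * v 0 + u 1 * v 1 + u 2 * v 2

/-- Cross product `u × v` on `ℝ³`. -/
def cross3 (u v : V3) : V3 :=
  ![u 1 * v 2 - u 2 * v 1, u 2 * v 0 - u 0 * v 2, u 0 * v 1 - u 1 * v 0]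

/-- The vector `r = (Rγ₁, Rγ₂, Rγ₃ + a)` joining the center of mass with the contact point. -/
def rvec (R a : ℝ) (γ : V3) : V3 := ![R * γ 0, R * γ 1, R * γ 2 + a]

/-- The tensor `I_Q = I + m (r,r) E − m r ⊗ r` with `I = diag (I1, I1, I3)`. -/
def IQ (m R I1 I3 a : ℝ) (γ : V3) : Matrix (Fin 3) (Fin 3) ℝ :=
  Matrix.diagonal ![I1, I1, I3]
    + (m * dot3 (rvec R a γ) (rvec R a γ)) • (1 : Matrix (Fin 3) (Fin 3) ℝ)
    - m • Matrix.of (fun i j => rvec R a γ i * rvec R a γ j)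

/-- The angular velocity `ω`, defined by `M = I_Q ω`. -/
def omega3 (m R I1 I3 a : ℝ) (γ M : V3) : V3 := ((IQ m R I1 I3 a γ)⁻¹).mulVec M

/-- The density `g(γ)` of the invariant measure. -/
def gR (m R I1 I3 a : ℝ) (γ : V3) : ℝ :=
  Real.sqrt (I1 * I3 + I1 * m * R ^ 2 * (dot3 γ γ - γ 2 ^ 2) + I3 * m * (R * γ 2 + a) ^ 2)

/-- The Routh-sphere vector field: `γ' = γ × ω`, `M' = M × ω + m r' × (ω × r)`,
`r' = R (γ × ω)`. -/
def XR (m R I1 I3 a : ℝ) (p : V3 × V3) : V3 × V3 :=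
  (cross3 p.1 (omega3 m R I1 I3 a p.1 p.2),
   cross3 p.2 (omega3 m R I1 I3 a p.1 p.2)
     + m • cross3 (R • cross3 p.1 (omega3 m R I1 I3 a p.1 p.2))
         (cross3 (omega3 m R I1 I3 a p.1 p.2) (rvec R a p.1)))

/-- `H₁ = (M, ω)`. -/
def H1R (m R I1 I3 a : ℝ) (p : V3 × V3) : ℝ := dot3 p.2 (omega3 m R I1 I3 a p.1 p.2)

/-- `H₂ = (M, M) − m (r, r) H₁`. -/
def H2R (m R I1 I3 a : ℝ) (p : V3 × V3) : ℝ :=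
  dot3 p.2 p.2 - m * dot3 (rvec R a p.1) (rvec R a p.1) * H1R m R I1 I3 a p

/-- The Jellet integral `H₃ = (M, r)`. -/
def H3R (R a : ℝ) (p : V3 × V3) : ℝ := dot3 p.2 (rvec R a p.1)

/-- `H₄ = (γ, γ)`. -/
def H4R (p : V3 × V3) : ℝ := dot3 p.1 p.1

/-- The Routh integral `Ĥ₂ = g(γ) ω₃`. -/
def Hhat2R (m R I1 I3 a : ℝ) (p : V3 × V3) : ℝ :=
  gR m R I1 I3 a p.1 * omega3 m R I1 I3 a p.1 p.2 2

/-- The gravitational potential `U = −m 𝗀 (r, γ)`. -/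
def Upot (m R a gr : ℝ) (γ : V3) : ℝ := -(m * gr * dot3 (rvec R a γ) γ)

/-- The gradient `∂U/∂γ` of the potential with respect to `γ`. -/
def gradU (m R a gr : ℝ) (γ : V3) : V3 :=
  fun i => fderiv ℝ (Upot m R a gr) γ (Pi.single i 1)

/-- The Routh-sphere vector field in a constant vertical gravity field:
`γ' = γ × ω`, `M' = M × ω + m r' × (ω × r) + γ × ∂U/∂γ`. -/
def Xg (m R I1 I3 a gr : ℝ) (p : V3 × V3) : V3 × V3 :=
  (cross3 p.1 (omega3 m R I1 I3 a p.1 p.2),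
   cross3 p.2 (omega3 m R I1 I3 a p.1 p.2)
     + m • cross3 (R • cross3 p.1 (omega3 m R I1 I3 a p.1 p.2))
         (cross3 (omega3 m R I1 I3 a p.1 p.2) (rvec R a p.1))
     + cross3 p.1 (gradU m R a gr p.1))

/-!
Write `I_Q ω = I ω + m r × (ω × r)` and differentiate `M = I_Q ω` along the field. Since `I_Q`
is symmetric, `(ω, M)` changes by `2 (ω, Ṁ) - (ω, İ_Q ω)`, and `(ω, İ_Q ω) = 2m (ω, ṙ × (ω × r))`
is exactly twice the contribution of the rolling term `m ṙ × (ω × r)` to `(ω, Ṁ)`. The gyroscopic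
term `M × ω` is orthogonal to `ω`, so what is left is `2 (ω, γ × ∂U/∂γ)`, which cancels the change
`2 (∂U/∂γ, γ × ω)` of `2U`.
-/

open Matrix

section Calculus

variable {𝕜 : Type*} [NontriviallyNormedField 𝕜] {ι : Type*} [Fintype ι]

theorem hasDerivAt_const_add_smul {F : Type*} [NormedAddCommGroup F] [NormedSpace 𝕜 F]
    (x v : F) (t : 𝕜) : HasDerivAt (fun s : 𝕜 => x + s • v) v t := by
  simpa using ((hasDerivAt_id t).smul_const v).const_add x

theorem HasDerivAt.dotProduct {f g : 𝕜 → ι → 𝕜} {f' g' : ι → 𝕜} {t : 𝕜}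
    (hf : HasDerivAt f f' t) (hg : HasDerivAt g g' t) :
    HasDerivAt (fun s => f s ⬝ᵥ g s) (f' ⬝ᵥ g t + f t ⬝ᵥ g') t := by
  have h := HasDerivAt.fun_sum (u := Finset.univ) fun i _ =>
    (hasDerivAt_pi.1 hf i).fun_mul (hasDerivAt_pi.1 hg i)
  rw [Finset.sum_add_distrib] at h
  exact h

theorem HasDerivAt.const_mulVec [DecidableEq ι] (A : Matrix ι ι 𝕜) {f : 𝕜 → ι → 𝕜}
    {f' : ι → 𝕜} {t : 𝕜} (hf : HasDerivAt f f' t) :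
    HasDerivAt (fun s => A *ᵥ f s) (A *ᵥ f') t :=
  hasDerivAt_pi.2 fun i => by
    simpa [mulVec] using (hasDerivAt_const t (A i)).dotProduct hf

theorem HasDerivAt.crossProduct {f g : 𝕜 → Fin 3 → 𝕜} {f' g' : Fin 3 → 𝕜} {t : 𝕜}
    (hf : HasDerivAt f f' t) (hg : HasDerivAt g g' t) :
    HasDerivAt (fun s => f s ⨯₃ g s) (f' ⨯₃ g t + f t ⨯₃ g') t := by
  have hf := hasDerivAt_pi.1 hf
  have hg := hasDerivAt_pi.1 hg
  refine hasDerivAt_pi.2 fun i => ?_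
  fin_cases i
  · convert ((hf 1).fun_mul (hg 2)).fun_sub ((hf 2).fun_mul (hg 1)) using 1 <;>
      simp [cross_apply]; ring
  · convert ((hf 2).fun_mul (hg 0)).fun_sub ((hf 0).fun_mul (hg 2)) using 1 <;>
      simp [cross_apply]; ring
  · convert ((hf 0).fun_mul (hg 1)).fun_sub ((hf 1).fun_mul (hg 0)) using 1 <;>
      simp [cross_apply]; ring

theorem DifferentiableAt.dotProduct {E : Type*} [NormedAddCommGroup E] [NormedSpace 𝕜 E]
    {f g : E → ι → 𝕜} {x : E} (hf : DifferentiableAt 𝕜 f x) (hg : DifferentiableAt 𝕜 g x) :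
    DifferentiableAt 𝕜 (fun y => f y ⬝ᵥ g y) x :=
  DifferentiableAt.fun_sum fun i _ =>
    (differentiableAt_pi.1 hf i).fun_mul (differentiableAt_pi.1 hg i)

theorem ContinuousLinearMap.apply_eq_dotProduct [DecidableEq ι] (L : (ι → 𝕜) →L[𝕜] 𝕜)
    (v : ι → 𝕜) : L v = (fun i => L (Pi.single i 1)) ⬝ᵥ v := by
  conv_lhs => rw [pi_eq_sum_univ' v]
  simp only [map_sum, map_smul, smul_eq_mul, dotProduct, mul_comm]

end Calculus

section Determinant

variable {𝕜 : Type*} [NontriviallyNormedField 𝕜] {E : Type*} [NormedAddCommGroup E]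
  [NormedSpace 𝕜 E] {n : Type*} [Fintype n] [DecidableEq n] {A : E → Matrix n n 𝕜} {x : E}

theorem DifferentiableAt.matrix_det (hA : ∀ i j, DifferentiableAt 𝕜 (fun y => A y i j) x) :
    DifferentiableAt 𝕜 (fun y => (A y).det) x := by
  simp only [det_apply, Units.smul_def, zsmul_eq_mul]
  exact DifferentiableAt.fun_sum fun σ _ =>
    (HasFDerivAt.finsetProd fun i _ => (hA (σ i) i).hasFDerivAt).differentiableAt.const_mul _

/-- Cramer's rule writes the entries of `A⁻¹ *ᵥ b` as quotients of determinants. -/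
theorem DifferentiableAt.matrix_inv_mulVec {b : E → n → 𝕜}
    (hA : ∀ i j, DifferentiableAt 𝕜 (fun y => A y i j) x) (hb : DifferentiableAt 𝕜 b x)
    (hdet : (A x).det ≠ 0) : DifferentiableAt 𝕜 (fun y => (A y)⁻¹ *ᵥ b y) x := by
  have hcramer : ∀ y i,
      ((A y)⁻¹ *ᵥ b y) i = ((A y).det)⁻¹ * ((A y).updateCol i (b y)).det := by
    intro y i
    rw [inv_def, smul_mulVec, ← cramer_eq_adjugate_mulVec, Pi.smul_apply, cramer_apply,
      Ring.inverse_eq_inv', smul_eq_mul]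
  refine differentiableAt_pi.2 fun i => ?_
  simp only [hcramer]
  refine ((DifferentiableAt.matrix_det hA).inv hdet).mul
    (DifferentiableAt.matrix_det fun k j => ?_)
  by_cases hj : j = i
  · simpa [updateCol_apply, hj] using differentiableAt_pi.1 hb k
  · simpa [updateCol_apply, hj] using hA k j

end Determinant

theorem rolling_energy_balance (A : Matrix (Fin 3) (Fin 3) ℝ) (hA : Aᵀ = A) (m : ℝ)
    {γ r r' ω ω' M M' g : Fin 3 → ℝ}
    (hM : M = A *ᵥ ω + m • (r ⨯₃ (ω ⨯₃ r)))
    (hlin : M' = A *ᵥ ω' + m • (r' ⨯₃ (ω ⨯₃ r) + r ⨯₃ (ω' ⨯₃ r + ω ⨯₃ r')))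
    (hfield : M' = M ⨯₃ ω + m • (r' ⨯₃ (ω ⨯₃ r)) + γ ⨯₃ g) :
    ω' ⬝ᵥ M + ω ⬝ᵥ M' + 2 * (g ⬝ᵥ γ ⨯₃ ω) = 0 := by
  have hinertia : ω' ⬝ᵥ A *ᵥ ω = ω ⬝ᵥ A *ᵥ ω' := by
    rw [dotProduct_mulVec, dotProduct_comm, ← mulVec_transpose, hA]
  have hrolling : ω' ⬝ᵥ r ⨯₃ (ω ⨯₃ r) = ω ⬝ᵥ r ⨯₃ (ω' ⨯₃ r) := by
    simp only [cross_apply, dotProduct, Fin.sum_univ_three, cons_val_zero, cons_val_one, cons_val]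
    ring
  have hswap : ω ⬝ᵥ r ⨯₃ (ω ⨯₃ r') = ω ⬝ᵥ r' ⨯₃ (ω ⨯₃ r) := by
    simp only [cross_apply, dotProduct, Fin.sum_univ_three, cons_val_zero, cons_val_one, cons_val]
    ring
  have htorque : g ⬝ᵥ γ ⨯₃ ω = -(ω ⬝ᵥ γ ⨯₃ g) := by
    simp only [cross_apply, dotProduct, Fin.sum_univ_three, cons_val_zero, cons_val_one, cons_val]
    ring
  have hkinetic : ω' ⬝ᵥ M = ω ⬝ᵥ M' - 2 * m * (ω ⬝ᵥ r' ⨯₃ (ω ⨯₃ r)) := by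
    rw [hM, hlin]
    simp only [dotProduct_add, dotProduct_smul, smul_eq_mul, map_add]
    rw [hinertia, hrolling, hswap]
    ring
  have hpower : ω ⬝ᵥ M' = m * (ω ⬝ᵥ r' ⨯₃ (ω ⨯₃ r)) + ω ⬝ᵥ γ ⨯₃ g := by
    rw [hfield]
    simp only [dotProduct_add, dotProduct_smul, smul_eq_mul, dot_cross_self]
    ring
  rw [hkinetic, htorque, hpower]
  ring

section RouthSphere

variable {m R I1 I3 a : ℝ}

theorem dot3_eq_dotProduct (u v : V3) : dot3 u v = u ⬝ᵥ v := by
  simp [dot3, dotProduct, Fin.sum_univ_three]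

theorem cross3_eq_crossProduct (u v : V3) : cross3 u v = u ⨯₃ v := by
  rw [cross_apply]; rfl

theorem rvec_eq_smul_add (γ : V3) : rvec R a γ = R • γ + ![0, 0, a] := by
  ext i; fin_cases i <;> simp [rvec]

@[fun_prop]
theorem differentiable_rvec : Differentiable ℝ (rvec R a) := by
  simp only [funext rvec_eq_smul_add]
  fun_prop

theorem IQ_mulVec (γ w : V3) :
    IQ m R I1 I3 a γ *ᵥ w
      = diagonal ![I1, I1, I3] *ᵥ w + m • (rvec R a γ ⨯₃ (w ⨯₃ rvec R a γ)) := by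
  ext i
  fin_cases i <;>
    simp [IQ, rvec, dot3, mulVec, dotProduct, Fin.sum_univ_three, cross_apply] <;> ring

theorem IQ_mulVec_omega3 {γ : V3} (hdet : (IQ m R I1 I3 a γ).det ≠ 0) (M : V3) :
    IQ m R I1 I3 a γ *ᵥ omega3 m R I1 I3 a γ M = M := by
  rw [omega3, mulVec_mulVec, mul_nonsing_inv _ hdet.isUnit, one_mulVec]

theorem momentum_eq_omega3 {γ : V3} (hdet : (IQ m R I1 I3 a γ).det ≠ 0) (M : V3) :
    M = diagonal ![I1, I1, I3] *ᵥ omega3 m R I1 I3 a γ M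
      + m • (rvec R a γ ⨯₃ (omega3 m R I1 I3 a γ M ⨯₃ rvec R a γ)) := by
  rw [← IQ_mulVec, IQ_mulVec_omega3 hdet]

theorem Xg_fst (gr : ℝ) (p : V3 × V3) :
    (Xg m R I1 I3 a gr p).1 = p.1 ⨯₃ omega3 m R I1 I3 a p.1 p.2 :=
  cross3_eq_crossProduct _ _

theorem Xg_snd (gr : ℝ) (p : V3 × V3) :
    (Xg m R I1 I3 a gr p).2 = p.2 ⨯₃ omega3 m R I1 I3 a p.1 p.2
      + m • ((R • (p.1 ⨯₃ omega3 m R I1 I3 a p.1 p.2))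
        ⨯₃ (omega3 m R I1 I3 a p.1 p.2 ⨯₃ rvec R a p.1))
      + p.1 ⨯₃ gradU m R a gr p.1 := by
  simp only [Xg, cross3_eq_crossProduct]

theorem differentiable_IQ_apply (i j : Fin 3) :
    Differentiable ℝ fun γ => IQ m R I1 I3 a γ i j := by
  simp only [IQ, dot3, Matrix.sub_apply, Matrix.add_apply, Matrix.smul_apply, of_apply,
    smul_eq_mul]
  fun_prop

theorem differentiableAt_omega3 {p : V3 × V3} (hdet : (IQ m R I1 I3 a p.1).det ≠ 0) :
    DifferentiableAt ℝ (fun q : V3 × V3 => omega3 m R I1 I3 a q.1 q.2) p :=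
  DifferentiableAt.matrix_inv_mulVec
    (fun i j => (differentiable_IQ_apply i j).differentiableAt.comp p differentiableAt_fst)
    differentiableAt_snd hdet

theorem differentiable_Upot (gr : ℝ) : Differentiable ℝ (Upot m R a gr) := by
  unfold Upot dot3
  fun_prop

theorem fderiv_Upot_apply (gr : ℝ) (γ w : V3) :
    fderiv ℝ (Upot m R a gr) γ w = gradU m R a gr γ ⬝ᵥ w :=
  ContinuousLinearMap.apply_eq_dotProduct _ w

theorem differentiableAt_energy {p : V3 × V3} (hdet : (IQ m R I1 I3 a p.1).det ≠ 0) (gr : ℝ) :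
    DifferentiableAt ℝ
      (fun q : V3 × V3 => omega3 m R I1 I3 a q.1 q.2 ⬝ᵥ q.2 + 2 * Upot m R a gr q.1) p :=
  ((differentiableAt_omega3 hdet).dotProduct differentiableAt_snd).add
    (((differentiable_Upot gr).differentiableAt.comp p differentiableAt_fst).const_mul 2)

theorem hasDerivAt_rvec_line (γ w : V3) (t : ℝ) :
    HasDerivAt (fun s : ℝ => rvec R a (γ + s • w)) (R • w) t := by
  simp only [rvec_eq_smul_add]
  simpa using ((hasDerivAt_const_add_smul γ w t).const_smul R).add_const ![0, 0, a]

theorem hasDerivAt_omega3_line {p : V3 × V3} (hdet : (IQ m R I1 I3 a p.1).det ≠ 0)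
    (v : V3 × V3) :
    HasDerivAt (fun t : ℝ => omega3 m R I1 I3 a (p.1 + t • v.1) (p.2 + t • v.2))
      (fderiv ℝ (fun q : V3 × V3 => omega3 m R I1 I3 a q.1 q.2) p v) 0 := by
  simpa only [HasLineDerivAt, Prod.fst_add, Prod.snd_add, Prod.smul_fst, Prod.smul_snd]
    using (differentiableAt_omega3 hdet).hasFDerivAt.hasLineDerivAt v

theorem momentum_linearization {γ M γ' M' ω' : V3} (hdet : (IQ m R I1 I3 a γ).det ≠ 0)
    (hω : HasDerivAt (fun t : ℝ => omega3 m R I1 I3 a (γ + t • γ') (M + t • M')) ω' 0) :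
    M' = diagonal ![I1, I1, I3] *ᵥ ω'
      + m • ((R • γ') ⨯₃ (omega3 m R I1 I3 a γ M ⨯₃ rvec R a γ)
        + rvec R a γ ⨯₃ (ω' ⨯₃ rvec R a γ + omega3 m R I1 I3 a γ M ⨯₃ (R • γ'))) := by
  have hr := hasDerivAt_rvec_line (R := R) (a := a) γ γ' 0
  have hdet_cont : ContinuousAt (fun t : ℝ => (IQ m R I1 I3 a (γ + t • γ')).det) 0 :=
    (DifferentiableAt.matrix_det fun i j => (differentiable_IQ_apply i j).differentiableAt.comp 0
      (hasDerivAt_const_add_smul γ γ' 0).differentiableAt).continuousAt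
  have hmomentum : ∀ᶠ t in nhds (0 : ℝ),
      diagonal ![I1, I1, I3] *ᵥ omega3 m R I1 I3 a (γ + t • γ') (M + t • M')
        + m • (rvec R a (γ + t • γ') ⨯₃ (omega3 m R I1 I3 a (γ + t • γ') (M + t • M')
          ⨯₃ rvec R a (γ + t • γ'))) = M + t • M' := by
    filter_upwards [hdet_cont.eventually_ne (by simpa using hdet)] with t ht
    exact (momentum_eq_omega3 ht _).symm
  have hlhs := (hω.const_mulVec (diagonal ![I1, I1, I3])).add
    ((hr.crossProduct (hω.crossProduct hr)).const_smul m)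
  simpa using ((hasDerivAt_const_add_smul M M' 0).congr_of_eventuallyEq hmomentum).unique hlhs

theorem hasLineDerivAt_energy {p : V3 × V3} (hdet : (IQ m R I1 I3 a p.1).det ≠ 0) (gr : ℝ)
    (v : V3 × V3) :
    HasLineDerivAt ℝ
      (fun q : V3 × V3 => omega3 m R I1 I3 a q.1 q.2 ⬝ᵥ q.2 + 2 * Upot m R a gr q.1)
      (fderiv ℝ (fun q : V3 × V3 => omega3 m R I1 I3 a q.1 q.2) p v ⬝ᵥ p.2
        + omega3 m R I1 I3 a p.1 p.2 ⬝ᵥ v.2 + 2 * (gradU m R a gr p.1 ⬝ᵥ v.1)) p v := by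
  have hU := (differentiable_Upot (m := m) (R := R) (a := a) gr p.1).hasFDerivAt.hasLineDerivAt v.1
  rw [fderiv_Upot_apply] at hU
  simpa only [HasLineDerivAt, Prod.fst_add, Prod.snd_add, Prod.smul_fst, Prod.smul_snd, zero_smul,
    add_zero] using ((hasDerivAt_omega3_line hdet v).dotProduct
      (hasDerivAt_const_add_smul p.2 v.2 0)).fun_add (hU.const_mul 2)

end RouthSphere

theorem routh_gravity_energy_conserved_general (m R I1 I3 a gr : ℝ)
    (p : V3 × V3) (hreg : IsUnit (IQ m R I1 I3 a p.1).det) :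
    fderiv ℝ (fun q => dot3 (omega3 m R I1 I3 a q.1 q.2) q.2 + 2 * Upot m R a gr q.1) p
      (Xg m R I1 I3 a gr p) = 0 := by
  have hdet : (IQ m R I1 I3 a p.1).det ≠ 0 := hreg.ne_zero
  have hlin := momentum_linearization hdet (hasDerivAt_omega3_line hdet (Xg m R I1 I3 a gr p))
  simp only [dot3_eq_dotProduct]
  rw [← (differentiableAt_energy hdet gr).lineDeriv_eq_fderiv,
    (hasLineDerivAt_energy hdet gr _).lineDeriv]
  rw [Xg_fst] at hlin ⊢
  exact rolling_energy_balance _ (diagonal_transpose _) m (momentum_eq_omega3 hdet p.2) hlin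
    (Xg_snd gr p)

/-- For the Routh sphere in a constant vertical gravity field, the energy
`H₁ = (ω, M) + 2U`, `U = −m 𝗀 (r, γ)`, is conserved: `X_𝗀(H₁) = 0`. -/
theorem routh_gravity_energy_conserved (m R I1 I3 a gr : ℝ) (hm : 0 < m) (hR : 0 < R) (hI1 : 0 < I1) (hI3 : 0 < I3)
    (hgr : 0 ≤ gr)
    (p : V3 × V3) (hreg : IsUnit (IQ m R I1 I3 a p.1).det) :
    fderiv ℝ (fun q => dot3 (omega3 m R I1 I3 a q.1 q.2) q.2 + 2 * Upot m R a gr q.1) p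
      (Xg m R I1 I3 a gr p) = 0 :=
  routh_gravity_energy_conserved_general m R I1 I3 a gr p hreg
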